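/- arXiv:2503.19618 — 5 statements merged into one kernel-verified Lean document; each statement's English description precedes it below -/
import Mathlib

section
/- The multi-sample Jensen lower bounds are monotone nondecreasing in the number of samples: for every integer n ≥ 1, L_n ≤ L_{n+1}. -/
/-!
The mean of `n + 1` samples is the average of its `n + 1` leave-one-out means, each a mean of
`n` samples. By concavity of `log`, the log of the full mean dominates the average of the logs of
the leave-one-out means. Under i.i.d. sampling every leave-one-out mean is distributed as an
`n`-sample mean, so taking expectations turns the right-hand side into `L_n`.
-/

open Finset

theorem Fin.sum_sum_succAbove {M : Type*} [AddCommGroup M] {n : ℕ} (x : Fin (n + 1) → M) :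
    ∑ j : Fin (n + 1), ∑ i, x (j.succAbove i) = n • ∑ i, x i := by
  have hsplit (j : Fin (n + 1)) : ∑ i, x (j.succAbove i) = ∑ i, x i - x j :=
    eq_sub_of_add_eq' (Fin.sum_univ_succAbove x j).symm
  simp only [hsplit, sum_sub_distrib, sum_const, succ_nsmul, add_sub_cancel_right]

theorem ConcaveOn.mean_map_leaveOneOutMean_le {s : Set ℝ} {φ : ℝ → ℝ} (hφ : ConcaveOn ℝ s φ)
    {n : ℕ} (hn : n ≠ 0) (x : Fin (n + 1) → ℝ)
    (hx : ∀ j : Fin (n + 1), (1 / (n : ℝ)) * ∑ i, x (j.succAbove i) ∈ s) :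
    (1 / ((n : ℝ) + 1)) * ∑ j : Fin (n + 1), φ ((1 / (n : ℝ)) * ∑ i, x (j.succAbove i)) ≤
      φ ((1 / ((n : ℝ) + 1)) * ∑ i, x i) := by
  have hmean : ∑ j : Fin (n + 1), (1 / ((n : ℝ) + 1)) • ((1 / (n : ℝ)) * ∑ i, x (j.succAbove i)) =
      (1 / ((n : ℝ) + 1)) * ∑ i, x i := by
    simp only [smul_eq_mul, ← mul_sum, Fin.sum_sum_succAbove, nsmul_eq_mul]
    field_simp
  have hweights : ∑ _j : Fin (n + 1), 1 / ((n : ℝ) + 1) = 1 := by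
    simp only [sum_const, card_univ, Fintype.card_fin, nsmul_eq_mul, Nat.cast_add_one]
    field_simp
  have hjensen := hφ.le_map_sum (t := univ) (fun _ _ => by positivity) hweights (fun j _ => hx j)
  rwa [hmean, ← smul_sum, smul_eq_mul] at hjensen

theorem sum_prod_mul_comp_succAbove {R C : Type*} [CommSemiring R] [Fintype C]
    (p : C → R) (hp : ∑ c, p c = 1) {n : ℕ} (j : Fin (n + 1)) (f : (Fin n → C) → R) :
    ∑ cs : Fin (n + 1) → C, (∏ i, p (cs i)) * f (fun i => cs (j.succAbove i)) =
      ∑ cs : Fin n → C, (∏ i, p (cs i)) * f cs := by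
  rw [← (Fin.insertNthEquiv (fun _ => C) j).sum_comp, Fintype.sum_prod_type]
  simp only [Fin.insertNthEquiv_apply, Fin.prod_univ_succAbove _ j, Fin.insertNth_apply_same,
    Fin.insertNth_apply_succAbove, mul_assoc, ← mul_sum, ← sum_mul, hp, one_mul]

theorem sum_prod_mul_mean_comp_succAbove {R C : Type*} [Field R] [CharZero R] [Fintype C]
    (p : C → R) (hp : ∑ c, p c = 1) {n : ℕ} (f : (Fin n → C) → R) :
    ∑ cs : Fin (n + 1) → C,
        (∏ i, p (cs i)) *
          ((1 / ((n : R) + 1)) * ∑ j : Fin (n + 1), f (fun i => cs (j.succAbove i))) =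
      ∑ cs : Fin n → C, (∏ i, p (cs i)) * f cs := by
  calc _ = (1 / ((n : R) + 1)) *
          ∑ j : Fin (n + 1), ∑ cs : Fin (n + 1) → C,
            (∏ i, p (cs i)) * f (fun i => cs (j.succAbove i)) := by
        simp only [mul_sum, mul_left_comm _ (1 / ((n : R) + 1))]
        exact sum_comm
    _ = (1 / ((n : R) + 1)) * ∑ _j : Fin (n + 1), ∑ cs : Fin n → C, (∏ i, p (cs i)) * f cs := by
        simp only [sum_prod_mul_comp_succAbove p hp]
    _ = _ := by
        rw [sum_const, card_univ, Fintype.card_fin, nsmul_eq_mul, Nat.cast_add_one, ← mul_assoc,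
          one_div_mul_cancel (Nat.cast_add_one_ne_zero n), one_mul]

theorem multi_sample_jensen_lower_bound_monotone_general
    {C : Type*} [Fintype C]
    (p ρ : C → ℝ)
    (hp0 : ∀ c, 0 ≤ p c) (hp1 : ∑ c, p c = 1)
    (hρ0 : ∀ c, 0 < ρ c)
    (n : ℕ) (hn : 1 ≤ n) :
    ∑ cs : Fin n → C, (∏ i, p (cs i)) * Real.log ((1 / (n : ℝ)) * ∑ i, ρ (cs i)) ≤
      ∑ cs : Fin (n + 1) → C,
        (∏ i, p (cs i)) * Real.log ((1 / ((n : ℝ) + 1)) * ∑ i, ρ (cs i)) := by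
  have : Nonempty (Fin n) := Fin.pos_iff_nonempty.mp hn
  rw [← sum_prod_mul_mean_comp_succAbove p hp1 fun cs => Real.log ((1 / (n : ℝ)) * ∑ i, ρ (cs i))]
  gcongr with cs
  · exact prod_nonneg fun i _ => hp0 _
  refine strictConcaveOn_log_Ioi.concaveOn.mean_map_leaveOneOutMean_le (by omega)
    (fun i => ρ (cs i)) fun j => ?_
  have := sum_pos (fun i _ => hρ0 (cs (j.succAbove i))) univ_nonempty
  exact Set.mem_Ioi.mpr (by positivity)

/-- The multi-sample Jensen lower bounds are monotone nondecreasing in the number of samples: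
for every integer `n ≥ 1`, `L_n ≤ L_{n+1}`. -/
theorem multi_sample_jensen_lower_bound_monotone
    {C : Type*} [Fintype C] [Nonempty C]
    (p ρ : C → ℝ)
    (hp0 : ∀ c, 0 ≤ p c) (hp1 : ∑ c, p c = 1)
    (hρ0 : ∀ c, 0 < ρ c) (hρ1 : ∀ c, ρ c ≤ 1)
    (n : ℕ) (hn : 1 ≤ n) :
    ∑ cs : Fin n → C, (∏ i, p (cs i)) * Real.log ((1 / (n : ℝ)) * ∑ i, ρ (cs i)) ≤
      ∑ cs : Fin (n + 1) → C,
        (∏ i, p (cs i)) * Real.log ((1 / ((n : ℝ) + 1)) * ∑ i, ρ (cs i)) :=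
  multi_sample_jensen_lower_bound_monotone_general p ρ hp0 hp1 hρ0 n hn
end

section
/- The multi-sample Jensen lower bounds converge to the log marginal likelihood: the sequence n ↦ L_n tends to log m as n → ∞. -/
/-!
Let `t = min ρ > 0`, `σ² = ∑ p (ρ - m)²`, and let `Ȳ` be the mean of `n` i.i.d. draws of `ρ`, so
`E Ȳ = m`, `Var Ȳ = σ² / n` and `Ȳ ≥ t`. By concavity, `E log Ȳ ≤ log m`. Conversely, on `[t, ∞)`
the logarithm stays above its tangent line at `m` minus `(y - m)² / t²`, so
`E log Ȳ ≥ log m - σ² / (t² n)`, and the bounds squeeze `L_n` to `log m`.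
-/

open Finset Real

theorem log_add_sub_div_sub_sq_div_le_log {t y m : ℝ} (ht : 0 < t) (hty : t ≤ y) (htm : t ≤ m) :
    log m + (y - m) / m - (y - m) ^ 2 / t ^ 2 ≤ log y := by
  have hy : 0 < y := ht.trans_le hty
  have hm : 0 < m := ht.trans_le htm
  have htangent : log m - log y ≤ m / y - 1 := by
    rw [← log_div hm.ne' hy.ne']
    exact log_le_sub_one_of_pos (div_pos hm hy)
  have hcurv : (y - m) / m - (1 - m / y) ≤ (y - m) ^ 2 / t ^ 2 :=
    calc (y - m) / m - (1 - m / y) = (y - m) ^ 2 / (m * y) := by field_simp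
      _ ≤ (y - m) ^ 2 / t ^ 2 :=
        div_le_div_of_nonneg_left (sq_nonneg _) (by positivity) (by nlinarith)
  linarith

theorem log_sum_mul_sub_div_sq_le_sum_mul_log {ι : Type*} [Fintype ι] {w y : ι → ℝ} {t : ℝ}
    (hw0 : ∀ i, 0 ≤ w i) (hw1 : ∑ i, w i = 1) (ht : 0 < t) (hty : ∀ i, t ≤ y i) :
    log (∑ i, w i * y i) - (∑ i, w i * (y i - ∑ j, w j * y j) ^ 2) / t ^ 2 ≤
      ∑ i, w i * log (y i) := by
  set m := ∑ j, w j * y j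
  have htm : t ≤ m :=
    calc t = ∑ i, w i * t := by rw [← sum_mul, hw1, one_mul]
      _ ≤ m := sum_le_sum fun i _ => mul_le_mul_of_nonneg_left (hty i) (hw0 i)
  calc log m - (∑ i, w i * (y i - m) ^ 2) / t ^ 2
      = ∑ i, w i * (log m + (y i - m) / m - (y i - m) ^ 2 / t ^ 2) := by
        simp only [mul_sub, mul_add, sum_sub_distrib, sum_add_distrib, ← sum_mul, mul_div_assoc',
          ← sum_div, hw1]
        ring
    _ ≤ ∑ i, w i * log (y i) := sum_le_sum fun i _ => mul_le_mul_of_nonneg_left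
        (log_add_sub_div_sub_sq_div_le_log ht (hty i) htm) (hw0 i)

theorem sum_mul_log_le_log_sum_mul {ι : Type*} [Fintype ι] {w y : ι → ℝ}
    (hw0 : ∀ i, 0 ≤ w i) (hw1 : ∑ i, w i = 1) (hy : ∀ i, 0 < y i) :
    ∑ i, w i * log (y i) ≤ log (∑ i, w i * y i) := by
  simpa only [smul_eq_mul] using
    strictConcaveOn_log_Ioi.concaveOn.le_map_sum (t := univ) (fun i _ => hw0 i) hw1 fun i _ => hy i

theorem le_one_div_mul_sum {n : ℕ} (hn : n ≠ 0) {t : ℝ} {y : Fin n → ℝ} (h : ∀ i, t ≤ y i) :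
    t ≤ 1 / (n : ℝ) * ∑ i, y i := by
  rw [one_div, inv_mul_eq_div, le_div_iff₀ (by positivity)]
  simpa [mul_comm] using card_nsmul_le_sum univ y t fun i _ => h i

section ProductWeights

variable {C : Type*} [Fintype C] {p : C → ℝ} {n : ℕ}

theorem sum_pi_prod_mul_prod (p : C → ℝ) (f : Fin n → C → ℝ) :
    ∑ cs : Fin n → C, (∏ k, p (cs k)) * ∏ k, f k (cs k) = ∏ k, ∑ c, p c * f k c := by
  simp only [Fintype.prod_sum, ← prod_mul_distrib]

theorem sum_pi_prod_eq_one (hp1 : ∑ c, p c = 1) : ∑ cs : Fin n → C, ∏ k, p (cs k) = 1 := by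
  simp [← Fintype.prod_sum, hp1]

theorem sum_pi_prod_mul_apply (hp1 : ∑ c, p c = 1) (f : C → ℝ) (i : Fin n) :
    ∑ cs : Fin n → C, (∏ k, p (cs k)) * f (cs i) = ∑ c, p c * f c := by
  simpa [ite_apply, mul_ite, sum_ite_irrel, hp1] using
    sum_pi_prod_mul_prod p fun k => if k = i then f else 1

theorem sum_pi_prod_mul_apply_mul_apply (hp1 : ∑ c, p c = 1) (f g : C → ℝ) {i j : Fin n}
    (hij : i ≠ j) :
    ∑ cs : Fin n → C, (∏ k, p (cs k)) * (f (cs i) * g (cs j)) =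
      (∑ c, p c * f c) * ∑ c, p c * g c := by
  have := sum_pi_prod_mul_prod p fun k => (if k = i then f else 1) * (if k = j then g else 1)
  simp only [Pi.mul_apply, prod_mul_distrib, ite_apply, Pi.one_apply, prod_ite_eq', mem_univ,
    if_true] at this
  rw [this, Fintype.prod_eq_mul i j hij fun k ⟨hki, hkj⟩ => by simp [hki, hkj, hp1]]
  simp [hij, hij.symm]

theorem sum_pi_prod_mul_sum_sq (hp1 : ∑ c, p c = 1) {g : C → ℝ} (hg : ∑ c, p c * g c = 0) :
    ∑ cs : Fin n → C, (∏ k, p (cs k)) * (∑ i, g (cs i)) ^ 2 = n * ∑ c, p c * g c ^ 2 := by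
  calc ∑ cs : Fin n → C, (∏ k, p (cs k)) * (∑ i, g (cs i)) ^ 2
      = ∑ i, ∑ j, ∑ cs : Fin n → C, (∏ k, p (cs k)) * (g (cs i) * g (cs j)) := by
        simp_rw [sq, sum_mul_sum, mul_sum]
        rw [sum_comm]
        exact sum_congr rfl fun i _ => sum_comm
    _ = ∑ i : Fin n, ∑ j : Fin n, if i = j then ∑ c, p c * g c ^ 2 else 0 := by
        refine sum_congr rfl fun i _ => sum_congr rfl fun j _ => ?_
        rcases eq_or_ne i j with rfl | hij
        · simpa [sq] using sum_pi_prod_mul_apply hp1 (fun c => g c * g c) i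
        · rw [if_neg hij, sum_pi_prod_mul_apply_mul_apply hp1 g g hij, hg, zero_mul]
    _ = n * ∑ c, p c * g c ^ 2 := by simp

theorem sum_pi_prod_mul_mean (hp1 : ∑ c, p c = 1) (hn : n ≠ 0) (f : C → ℝ) :
    ∑ cs : Fin n → C, (∏ k, p (cs k)) * (1 / (n : ℝ) * ∑ i, f (cs i)) = ∑ c, p c * f c := by
  calc ∑ cs : Fin n → C, (∏ k, p (cs k)) * (1 / (n : ℝ) * ∑ i, f (cs i))
      = 1 / (n : ℝ) * ∑ i, ∑ cs : Fin n → C, (∏ k, p (cs k)) * f (cs i) := by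
        simp only [mul_sum, mul_left_comm (1 / (n : ℝ))]
        exact sum_comm
    _ = ∑ c, p c * f c := by simp [sum_pi_prod_mul_apply hp1, hn]

theorem sum_pi_prod_mul_mean_sub_sq (hp1 : ∑ c, p c = 1) (hn : n ≠ 0) (f : C → ℝ) :
    ∑ cs : Fin n → C, (∏ k, p (cs k)) * (1 / (n : ℝ) * ∑ i, f (cs i) - ∑ c, p c * f c) ^ 2 =
      (∑ c, p c * (f c - ∑ c', p c' * f c') ^ 2) / n := by
  set m := ∑ c, p c * f c
  have hcentered : ∑ c, p c * (f c - m) = 0 := by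
    simp only [mul_sub, sum_sub_distrib, ← sum_mul, hp1, one_mul]
    exact sub_self m
  have hmean_sub (cs : Fin n → C) :
      1 / (n : ℝ) * ∑ i, f (cs i) - m = 1 / (n : ℝ) * ∑ i, (f (cs i) - m) := by
    rw [sum_sub_distrib, sum_const, card_univ, Fintype.card_fin, nsmul_eq_mul]
    field_simp
  calc ∑ cs : Fin n → C, (∏ k, p (cs k)) * (1 / (n : ℝ) * ∑ i, f (cs i) - m) ^ 2
      = (1 / (n : ℝ)) ^ 2 * ∑ cs : Fin n → C, (∏ k, p (cs k)) * (∑ i, (f (cs i) - m)) ^ 2 := by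
        rw [mul_sum]
        exact sum_congr rfl fun cs _ => by rw [hmean_sub]; ring
    _ = (∑ c, p c * (f c - m) ^ 2) / n := by
        rw [sum_pi_prod_mul_sum_sq hp1 hcentered]
        field_simp

end ProductWeights

theorem multi_sample_jensen_lower_bound_tendsto_general
    {C : Type*} [Fintype C] [Nonempty C]
    (p ρ : C → ℝ)
    (hp0 : ∀ c, 0 ≤ p c) (hp1 : ∑ c, p c = 1)
    (hρ0 : ∀ c, 0 < ρ c) :
    Filter.Tendsto
      (fun n : ℕ =>
        ∑ cs : Fin n → C, (∏ i, p (cs i)) * Real.log ((1 / (n : ℝ)) * ∑ i, ρ (cs i)))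
      Filter.atTop (nhds (Real.log (∑ c, p c * ρ c))) := by
  obtain ⟨c₀, hc₀⟩ := Finite.exists_min ρ
  set m := ∑ c, p c * ρ c
  set V := ∑ c, p c * (ρ c - m) ^ 2
  have hweight_nonneg (n : ℕ) (cs : Fin n → C) : 0 ≤ ∏ k, p (cs k) :=
    prod_nonneg fun k _ => hp0 (cs k)
  have hmean_ge {n : ℕ} (hn : n ≠ 0) (cs : Fin n → C) : ρ c₀ ≤ 1 / (n : ℝ) * ∑ i, ρ (cs i) :=
    le_one_div_mul_sum hn fun i => hc₀ (cs i)
  have hlower {n : ℕ} (hn : n ≠ 0) : log m - V / ρ c₀ ^ 2 / n ≤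
      ∑ cs : Fin n → C, (∏ i, p (cs i)) * log (1 / (n : ℝ) * ∑ i, ρ (cs i)) := by
    have := log_sum_mul_sub_div_sq_le_sum_mul_log (hweight_nonneg n) (sum_pi_prod_eq_one hp1)
      (hρ0 c₀) (hmean_ge hn)
    rwa [sum_pi_prod_mul_mean hp1 hn, sum_pi_prod_mul_mean_sub_sq hp1 hn, div_right_comm] at this
  have hupper {n : ℕ} (hn : n ≠ 0) :
      ∑ cs : Fin n → C, (∏ i, p (cs i)) * log (1 / (n : ℝ) * ∑ i, ρ (cs i)) ≤ log m := by
    have := sum_mul_log_le_log_sum_mul (hweight_nonneg n) (sum_pi_prod_eq_one hp1)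
      fun cs => (hρ0 c₀).trans_le (hmean_ge hn cs)
    rwa [sum_pi_prod_mul_mean hp1 hn] at this
  have hlim :
      Filter.Tendsto (fun n : ℕ => log m - V / ρ c₀ ^ 2 / n) Filter.atTop (nhds (log m)) := by
    simpa using tendsto_const_nhds.sub (tendsto_const_div_atTop_nhds_zero_nat (V / ρ c₀ ^ 2))
  refine tendsto_of_tendsto_of_tendsto_of_le_of_le' hlim tendsto_const_nhds ?_ ?_
  · filter_upwards [Filter.eventually_ne_atTop 0] with n hn using hlower hn
  · filter_upwards [Filter.eventually_ne_atTop 0] with n hn using hupper hn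

/-- The multi-sample Jensen lower bounds converge to the log marginal likelihood:
`L_n → log m` as `n → ∞`. -/
theorem multi_sample_jensen_lower_bound_tendsto
    {C : Type*} [Fintype C] [Nonempty C]
    (p ρ : C → ℝ)
    (hp0 : ∀ c, 0 ≤ p c) (hp1 : ∑ c, p c = 1)
    (hρ0 : ∀ c, 0 < ρ c) (hρ1 : ∀ c, ρ c ≤ 1) :
    Filter.Tendsto
      (fun n : ℕ =>
        ∑ cs : Fin n → C, (∏ i, p (cs i)) * Real.log ((1 / (n : ℝ)) * ∑ i, ρ (cs i)))
      Filter.atTop (nhds (Real.log (∑ c, p c * ρ c))) :=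
  multi_sample_jensen_lower_bound_tendsto_general p ρ hp0 hp1 hρ0
end

section
/- For a probability mass function q on C, the evidence lower bound is tight if and only if q equals the posterior: ELBO(q) = log m ↔ q = q*. -/
/-- For a probability mass function `q` on `C`, the evidence lower bound is tight if and only if
`q` equals the posterior: `ELBO(q) = log m ↔ q = q*` where `q* c = p c * ρ c / m`. -/
theorem elbo_tight_iff_eq_posterior
    {C : Type*} [Fintype C] [Nonempty C]
    (p ρ : C → ℝ)
    (hp0 : ∀ c, 0 < p c) (hp1 : ∑ c, p c = 1)
    (hρ0 : ∀ c, 0 < ρ c) (hρ1 : ∀ c, ρ c ≤ 1)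
    (q : C → ℝ) (hq0 : ∀ c, 0 ≤ q c) (hq1 : ∑ c, q c = 1) :
    (∑ c, q c * (Real.log (ρ c) - Real.log (q c / p c)) = Real.log (∑ c, p c * ρ c)) ↔
      q = fun c => p c * ρ c / (∑ c', p c' * ρ c') := by
  set m := ∑ c', p c' * ρ c' with hm_def
  have hm : 0 < m := Finset.sum_pos (fun c _ => mul_pos (hp0 c) (hρ0 c)) Finset.univ_nonempty
  have hqs : ∀ c, 0 < p c * ρ c / m := fun c => div_pos (mul_pos (hp0 c) (hρ0 c)) hm
  have hsum_qs : ∑ c, p c * ρ c / m = 1 := by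
    rw [← Finset.sum_div, ← hm_def]; exact div_self hm.ne'
  constructor
  · intro h
    have key : ∑ c, q c * (Real.log (ρ c) - Real.log (q c / p c) - Real.log m)
        = ∑ c, (p c * ρ c / m - q c) := by
      have h1 : ∑ c, (p c * ρ c / m - q c) = 0 := by
        rw [Finset.sum_sub_distrib, hsum_qs, hq1]; ring
      have h2 : ∑ c, q c * (Real.log (ρ c) - Real.log (q c / p c) - Real.log m)
          = (∑ c, q c * (Real.log (ρ c) - Real.log (q c / p c))) - Real.log m := by
        have : ∀ c, q c * (Real.log (ρ c) - Real.log (q c / p c) - Real.log m)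
            = q c * (Real.log (ρ c) - Real.log (q c / p c)) - q c * Real.log m := by
          intro c; ring
        simp_rw [this]
        rw [Finset.sum_sub_distrib, ← Finset.sum_mul, hq1, one_mul]
      rw [h2, h, h1]; ring
    have hle : ∀ c ∈ Finset.univ, q c * (Real.log (ρ c) - Real.log (q c / p c) - Real.log m)
        ≤ p c * ρ c / m - q c := by
      intro c _
      rcases eq_or_lt_of_le (hq0 c) with h0 | h0
      · rw [← h0]
        simpa using (hqs c).le
      · have hx : 0 < p c * ρ c / m / q c := div_pos (hqs c) h0
        have e1 : p c * ρ c / m / q c = ρ c / (q c / p c) / m := by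
          field_simp
        have hlog : Real.log (ρ c) - Real.log (q c / p c) - Real.log m
            = Real.log (p c * ρ c / m / q c) := by
          rw [e1, Real.log_div (div_ne_zero (hρ0 c).ne' (div_ne_zero h0.ne' (hp0 c).ne')) hm.ne',
            Real.log_div (hρ0 c).ne' (div_ne_zero h0.ne' (hp0 c).ne')]
        rw [hlog]
        calc q c * Real.log (p c * ρ c / m / q c)
            ≤ q c * (p c * ρ c / m / q c - 1) :=
              mul_le_mul_of_nonneg_left (Real.log_le_sub_one_of_pos hx) (hq0 c)
          _ = p c * ρ c / m - q c := by field_simp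
    have heach := (Finset.sum_eq_sum_iff_of_le hle).mp key
    funext c
    have hc := heach c (Finset.mem_univ c)
    rcases eq_or_lt_of_le (hq0 c) with h0 | h0
    · exfalso
      rw [← h0] at hc
      simp at hc
      exact absurd hc.symm (hqs c).ne'
    · have hx : 0 < p c * ρ c / m / q c := div_pos (hqs c) h0
      have e1 : p c * ρ c / m / q c = ρ c / (q c / p c) / m := by
        field_simp
      have hlog : Real.log (ρ c) - Real.log (q c / p c) - Real.log m
          = Real.log (p c * ρ c / m / q c) := by
        rw [e1, Real.log_div (div_ne_zero (hρ0 c).ne' (div_ne_zero h0.ne' (hp0 c).ne')) hm.ne',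
          Real.log_div (hρ0 c).ne' (div_ne_zero h0.ne' (hp0 c).ne')]
      rw [hlog] at hc
      by_contra hne
      have hxne : p c * ρ c / m / q c ≠ 1 := by
        intro h1
        apply hne
        have := (div_eq_one_iff_eq h0.ne').mp h1
        simp only [this]
      have hlt : Real.log (p c * ρ c / m / q c) < p c * ρ c / m / q c - 1 :=
        Real.log_lt_sub_one_of_pos hx hxne
      have : q c * Real.log (p c * ρ c / m / q c) < q c * (p c * ρ c / m / q c - 1) :=
        mul_lt_mul_of_pos_left hlt h0
      rw [hc] at this
      have he : q c * (p c * ρ c / m / q c - 1) = p c * ρ c / m - q c := by field_simp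
      rw [he] at this
      exact lt_irrefl _ this
  · intro h
    rw [h]
    have hinner : ∀ c, Real.log (ρ c) - Real.log ((p c * ρ c / m) / p c) = Real.log m := by
      intro c
      have e : (p c * ρ c / m) / p c = ρ c / m := by
        rw [div_div, mul_comm m (p c), ← div_div, mul_div_cancel_left₀ _ (hp0 c).ne']
      rw [e, Real.log_div (hρ0 c).ne' hm.ne']; ring
    simp only
    simp_rw [hinner]
    rw [← Finset.sum_mul, hsum_qs, one_mul]
end

section
/- The multi-sample gradient estimate is unbiased: the function θ ↦ ∑_{(c_1,…,c_n) ∈ C^n} (∏_{i=1}^n π θ c_i) * log ((1/n) * ∑_{i=1}^n κ θ c_i a*) has derivative at θ₀ equal to ∑_{(c_1,…,c_n) ∈ C^n} (∏_{i=1}^n π θ₀ c_i) * [ (∑_{i=1}^n sc c_i) * log ((1/n) * ∑_{j=1}^n κ θ₀ c_j a*) + (∑_{i=1}^n deriv (fun θ => κ θ c_i a*) θ₀) / (∑_{j=1}^n κ θ₀ c_j a*) ]. -/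
/-! The estimate is differentiated term by term over `Cⁿ`. In each term the product rule for
`∏ i, π θ cᵢ` is rewritten through the log-derivative identity `(∏ fᵢ)' = (∏ fᵢ) · ∑ (log fᵢ)'`,
which is where the score functions come from, and the factor `1 / n` inside the logarithm
cancels from the derivative `(∑ κ') / (∑ κ)`. -/

open Finset

theorem hasDerivAt_finsetProd_eq_prod_mul_sum_deriv_log {ι : Type*} {s : Finset ι}
    {f : ι → ℝ → ℝ} {x : ℝ} (hf : ∀ i ∈ s, f i x ≠ 0)
    (hd : ∀ i ∈ s, DifferentiableAt ℝ (f i) x) :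
    HasDerivAt (fun θ => ∏ i ∈ s, f i θ)
      ((∏ i ∈ s, f i x) * ∑ i ∈ s, deriv (fun θ => Real.log (f i θ)) x) x := by
  have hprod_ne : ∏ i ∈ s, f i x ≠ 0 := prod_ne_zero_iff.2 hf
  have hscore : ∑ i ∈ s, deriv (fun θ => Real.log (f i θ)) x = ∑ i ∈ s, logDeriv (f i) x :=
    sum_congr rfl fun i hi => Real.deriv_log_comp_eq_logDeriv (hd i hi) (hf i hi)
  rw [hscore, ← logDeriv_prod hf hd, logDeriv_apply, mul_div_cancel₀ _ hprod_ne]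
  exact (DifferentiableAt.fun_finsetProd hd).hasDerivAt

theorem HasDerivAt.log_const_mul {S : ℝ → ℝ} {S' c x : ℝ} (hS : HasDerivAt S S' x)
    (hc : c ≠ 0) (hSx : S x ≠ 0) :
    HasDerivAt (fun θ => Real.log (c * S θ)) (S' / S x) x := by
  simpa only [mul_div_mul_left _ _ hc] using (hS.const_mul c).log (mul_ne_zero hc hSx)

theorem multi_sample_gradient_unbiased_general
    {C A : Type*} [Fintype C]
    (θ₀ : ℝ) (astar : A)
    (π : ℝ → C → ℝ) (κ : ℝ → C → A → ℝ)
    (hπpos : ∀ c, 0 < π θ₀ c) (hκpos : ∀ c a, 0 < κ θ₀ c a)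
    (hπdiff : ∀ c, DifferentiableAt ℝ (fun θ => π θ c) θ₀)
    (hκdiff : ∀ c a, DifferentiableAt ℝ (fun θ => κ θ c a) θ₀)
    (n : ℕ) (hn : 1 ≤ n) :
    HasDerivAt
      (fun θ =>
        ∑ cs : Fin n → C,
          (∏ i, π θ (cs i)) * Real.log ((1 / (n : ℝ)) * ∑ i, κ θ (cs i) astar))
      (∑ cs : Fin n → C,
        (∏ i, π θ₀ (cs i)) *
          ((∑ i, deriv (fun θ => Real.log (π θ (cs i))) θ₀) *
              Real.log ((1 / (n : ℝ)) * ∑ j, κ θ₀ (cs j) astar) +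
            (∑ i, deriv (fun θ => κ θ (cs i) astar) θ₀) / (∑ j, κ θ₀ (cs j) astar)))
      θ₀ := by
  refine HasDerivAt.fun_sum fun cs _ => ?_
  have hprod := hasDerivAt_finsetProd_eq_prod_mul_sum_deriv_log (s := univ)
    (fun i _ => (hπpos (cs i)).ne') (fun i _ => hπdiff (cs i))
  have hsum_pos : 0 < ∑ j, κ θ₀ (cs j) astar :=
    sum_pos (fun j _ => hκpos (cs j) astar) ⟨⟨0, hn⟩, mem_univ _⟩
  have hlog := (HasDerivAt.fun_sum fun i _ => (hκdiff (cs i) astar).hasDerivAt).log_const_mul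
    (one_div_ne_zero (Nat.cast_pos.2 hn).ne') hsum_pos.ne'
  exact (hprod.fun_mul hlog).congr_deriv (by ring)

/-- The multi-sample gradient estimate is unbiased: the function
`θ ↦ ∑_{c₁,…,cₙ} (∏ i, π θ cᵢ) * log ((1/n) * ∑ i, κ θ cᵢ a*)` has derivative at `θ₀` equal to
`∑_{c₁,…,cₙ} (∏ i, π θ₀ cᵢ) * ((∑ i, sc cᵢ) * log ((1/n) * ∑ j, κ θ₀ cⱼ a*)
  + (∑ i, deriv (fun θ => κ θ cᵢ a*) θ₀) / (∑ j, κ θ₀ cⱼ a*))`,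
where `sc c = deriv (fun θ => log (π θ c)) θ₀`. -/
theorem multi_sample_gradient_unbiased
    {C A : Type*} [Fintype C] [Fintype A] [Nonempty C] [Nonempty A]
    (θ₀ : ℝ) (astar : A)
    (π : ℝ → C → ℝ) (κ : ℝ → C → A → ℝ)
    (hπ0 : ∀ θ c, 0 ≤ π θ c) (hπ1 : ∀ θ, ∑ c, π θ c = 1)
    (hκ0 : ∀ θ c a, 0 ≤ κ θ c a) (hκ1 : ∀ θ c, ∑ a, κ θ c a = 1)
    (hπpos : ∀ c, 0 < π θ₀ c) (hκpos : ∀ c a, 0 < κ θ₀ c a)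
    (hπdiff : ∀ c, DifferentiableAt ℝ (fun θ => π θ c) θ₀)
    (hκdiff : ∀ c a, DifferentiableAt ℝ (fun θ => κ θ c a) θ₀)
    (n : ℕ) (hn : 1 ≤ n) :
    HasDerivAt
      (fun θ =>
        ∑ cs : Fin n → C,
          (∏ i, π θ (cs i)) * Real.log ((1 / (n : ℝ)) * ∑ i, κ θ (cs i) astar))
      (∑ cs : Fin n → C,
        (∏ i, π θ₀ (cs i)) *
          ((∑ i, deriv (fun θ => Real.log (π θ (cs i))) θ₀) *
              Real.log ((1 / (n : ℝ)) * ∑ j, κ θ₀ (cs j) astar) +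
            (∑ i, deriv (fun θ => κ θ (cs i) astar) θ₀) / (∑ j, κ θ₀ (cs j) astar)))
      θ₀ :=
  multi_sample_gradient_unbiased_general θ₀ astar π κ hπpos hκpos hπdiff hκdiff n hn
end

section
/- Conditional expectation identity: for every c = (c_1,…,c_n) ∈ C^n, averaging the vanilla policy-gradient estimate over the answers drawn independently from the conditionals yields the variance-reduced estimate: ∑_{(a_1,…,a_n) ∈ A^n} (∏_{i=1}^n κ θ₀ c_i a_i) * g_pg ((c_1,a_1),…,(c_n,a_n)) = g_vr c. -/
/-!
Given the chains, the answers `aᵢ` are independent with laws `κ θ₀ cᵢ`. In the `i`-th summand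
of `g_pg`, the part depending on `aᵢ` alone averages to `sc cᵢ * κ(cᵢ, a*) + κ(cᵢ, a*) * sa cᵢ a*`,
and `κ * ∂ log κ = ∂κ`. The baseline terms pair `aᵢ` with an independent `aⱼ`, so they factor
into `E[sc cᵢ + sa cᵢ aᵢ] * κ(cⱼ, a*) = sc cᵢ * κ(cⱼ, a*)`: the score `sa c ·` has mean zero,
being the derivative of `∑ₐ κ θ c a = 1`.
-/

open Finset

section ProductWeights

variable {ι A : Type*} [Fintype ι] [DecidableEq ι] [Fintype A]

theorem sum_prod_mul_prod_eq_prod_sum (w : ι → A → ℝ) (hw : ∀ j, ∑ a, w j a = 1)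
    (s : Finset ι) (h : ι → A → ℝ) :
    ∑ as : ι → A, (∏ j, w j (as j)) * ∏ j ∈ s, h j (as j) =
      ∏ j ∈ s, ∑ a, w j a * h j a := by
  have hmarg : ∀ j, ∑ a, w j a * (if j ∈ s then h j a else 1) =
      if j ∈ s then ∑ a, w j a * h j a else 1 := by
    intro j
    split_ifs <;> simp [hw]
  calc ∑ as : ι → A, (∏ j, w j (as j)) * ∏ j ∈ s, h j (as j)
      = ∑ as : ι → A, ∏ j, w j (as j) * (if j ∈ s then h j (as j) else 1) := by
        simp only [prod_mul_distrib, prod_ite_mem, univ_inter]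
    _ = ∏ j ∈ s, ∑ a, w j a * h j a := by
        rw [← Fintype.prod_sum fun j a => w j a * if j ∈ s then h j a else 1]
        simp only [hmarg, prod_ite_mem, univ_inter]

theorem sum_prod_mul_apply (w : ι → A → ℝ) (hw : ∀ j, ∑ a, w j a = 1) (i : ι) (f : A → ℝ) :
    ∑ as : ι → A, (∏ j, w j (as j)) * f (as i) = ∑ a, w i a * f a := by
  simpa using sum_prod_mul_prod_eq_prod_sum w hw {i} fun _ => f

theorem sum_prod_mul_apply_mul_apply (w : ι → A → ℝ) (hw : ∀ j, ∑ a, w j a = 1) {i j : ι}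
    (hij : i ≠ j) (f g : A → ℝ) :
    ∑ as : ι → A, (∏ k, w k (as k)) * (f (as i) * g (as j)) =
      (∑ a, w i a * f a) * ∑ a, w j a * g a := by
  simpa [prod_pair hij, hij.symm] using
    sum_prod_mul_prod_eq_prod_sum w hw {i, j} fun k => if k = i then f else g

theorem sum_prod_mul_mul_sub_sum_erase (w : ι → A → ℝ) (hw : ∀ j, ∑ a, w j a = 1) (i : ι)
    (f x : A → ℝ) (c : ℝ) :
    ∑ as : ι → A,
        (∏ j, w j (as j)) * (f (as i) * (x (as i) - c * ∑ j ∈ univ.erase i, x (as j))) =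
      ∑ a, w i a * (f a * x a) -
        c * ((∑ a, w i a * f a) * ∑ j ∈ univ.erase i, ∑ a, w j a * x a) := by
  have hcross : ∀ j ∈ univ.erase i,
      ∑ as : ι → A, (∏ k, w k (as k)) * (f (as i) * x (as j)) =
        (∑ a, w i a * f a) * ∑ a, w j a * x a :=
    fun j hj => sum_prod_mul_apply_mul_apply w hw (ne_of_mem_erase hj).symm f x
  calc _ = ∑ as : ι → A, (∏ j, w j (as j)) * (f (as i) * x (as i)) -
        c * ∑ j ∈ univ.erase i, ∑ as : ι → A, (∏ k, w k (as k)) * (f (as i) * x (as j)) := by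
        rw [sum_comm, mul_sum, ← sum_sub_distrib]
        refine sum_congr rfl fun as _ => ?_
        simp only [mul_sub, mul_sum]
        congr 1
        exact sum_congr rfl fun j _ => by ring
    _ = _ := by
      rw [sum_prod_mul_apply w hw i fun a => f a * x a, sum_congr rfl hcross, ← mul_sum]

end ProductWeights

theorem mul_deriv_log_eq_deriv {f : ℝ → ℝ} {x : ℝ} (hf : DifferentiableAt ℝ f x) (hx : f x ≠ 0) :
    f x * deriv (fun y => Real.log (f y)) x = deriv f x := by
  rw [deriv.log hf hx, mul_div_cancel₀ _ hx]

section Score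

variable {A : Type*} [Fintype A] {p : ℝ → A → ℝ} {θ₀ : ℝ}

theorem sum_deriv_eq_zero_of_sum_eq_one (hp : ∀ θ, ∑ a, p θ a = 1)
    (hd : ∀ a, DifferentiableAt ℝ (fun θ => p θ a) θ₀) :
    ∑ a, deriv (fun θ => p θ a) θ₀ = 0 := by
  rw [← deriv_fun_sum fun a _ => hd a]
  simp [hp]

theorem sum_mul_deriv_log_eq_zero (hp : ∀ θ, ∑ a, p θ a = 1)
    (hd : ∀ a, DifferentiableAt ℝ (fun θ => p θ a) θ₀) (hne : ∀ a, p θ₀ a ≠ 0) :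
    ∑ a, p θ₀ a * deriv (fun θ => Real.log (p θ a)) θ₀ = 0 := by
  rw [← sum_deriv_eq_zero_of_sum_eq_one hp hd]
  exact sum_congr rfl fun a _ => mul_deriv_log_eq_deriv (hd a) (hne a)

end Score

theorem conditional_expectation_of_vanilla_pg_eq_var_reduced_pg_general
    {C A : Type*} [Fintype A] [DecidableEq A]
    (θ₀ : ℝ) (astar : A)
    (π : ℝ → C → ℝ) (κ : ℝ → C → A → ℝ)
    (hκ1 : ∀ θ c, ∑ a, κ θ c a = 1)
    (hκpos : ∀ c a, 0 < κ θ₀ c a)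
    (hκdiff : ∀ c a, DifferentiableAt ℝ (fun θ => κ θ c a) θ₀)
    (n : ℕ)
    (gpg : (Fin n → C × A) → ℝ)
    (hgpg : ∀ y, gpg y =
      (1 / (n : ℝ)) *
        ∑ i,
          (deriv (fun θ => Real.log (π θ (y i).1)) θ₀ +
              deriv (fun θ => Real.log (κ θ (y i).1 (y i).2)) θ₀) *
            ((if (y i).2 = astar then (1 : ℝ) else 0) -
              (1 / ((n : ℝ) - 1)) *
                ∑ j ∈ Finset.univ.erase i, (if (y j).2 = astar then (1 : ℝ) else 0)))
    (gvr : (Fin n → C) → ℝ)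
    (hgvr : ∀ c, gvr c =
      (1 / (n : ℝ)) *
        ∑ i,
          (deriv (fun θ => Real.log (π θ (c i))) θ₀ *
              (κ θ₀ (c i) astar -
                (1 / ((n : ℝ) - 1)) * ∑ j ∈ Finset.univ.erase i, κ θ₀ (c j) astar) +
            deriv (fun θ => κ θ (c i) astar) θ₀)) :
    ∀ cs : Fin n → C,
      ∑ as : Fin n → A, (∏ i, κ θ₀ (cs i) (as i)) * gpg (fun i => (cs i, as i)) = gvr cs := by
  intro cs
  set sc := fun c => deriv (fun θ => Real.log (π θ c)) θ₀
  set sa := fun c a => deriv (fun θ => Real.log (κ θ c a)) θ₀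
  have hw (i : Fin n) : ∑ a, κ θ₀ (cs i) a = 1 := hκ1 θ₀ (cs i)
  have hscore_mean (i : Fin n) : ∑ a, κ θ₀ (cs i) a * (sc (cs i) + sa (cs i) a) = sc (cs i) := by
    simp only [mul_add, sum_add_distrib, ← sum_mul, hw, one_mul, sa,
      sum_mul_deriv_log_eq_zero (hκ1 · (cs i)) (hκdiff (cs i)) fun a => (hκpos (cs i) a).ne',
      add_zero]
  have hhit_score (i : Fin n) : ∑ a, κ θ₀ (cs i) a * ((sc (cs i) + sa (cs i) a) *
      if a = astar then 1 else 0) =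
      sc (cs i) * κ θ₀ (cs i) astar + deriv (fun θ => κ θ (cs i) astar) θ₀ := by
    simp only [mul_ite, mul_one, mul_zero, sum_ite_eq', mem_univ, if_true]
    rw [mul_add, mul_deriv_log_eq_deriv (hκdiff (cs i) astar) (hκpos (cs i) astar).ne', mul_comm]
  have hhit_prob (j : Fin n) :
      ∑ a, κ θ₀ (cs j) a * (if a = astar then 1 else 0) = κ θ₀ (cs j) astar := by
    simp
  rw [hgvr]
  simp only [hgpg, mul_left_comm _ (1 / (n : ℝ)), ← mul_sum]
  rw [sum_congr rfl fun as _ => mul_sum _ _ _, sum_comm]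
  congr 1
  refine sum_congr rfl fun i _ => ?_
  rw [sum_prod_mul_mul_sub_sum_erase (fun j a => κ θ₀ (cs j) a) hw i
      (fun a => sc (cs i) + sa (cs i) a) fun a => if a = astar then 1 else 0,
    hhit_score, hscore_mean, sum_congr rfl fun j _ => hhit_prob j]
  ring

/-- Conditional expectation identity: for every tuple of chain-of-thoughts `c ∈ Cⁿ`,
averaging the vanilla policy-gradient estimate over the answers drawn independently from the
conditionals yields the variance-reduced estimate:
`∑_{a₁,…,aₙ} (∏ i, κ θ₀ cᵢ aᵢ) * g_pg ((c₁,a₁),…,(cₙ,aₙ)) = g_vr c`. -/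
theorem conditional_expectation_of_vanilla_pg_eq_var_reduced_pg
    {C A : Type*} [Fintype C] [Fintype A] [Nonempty C] [Nonempty A] [DecidableEq A]
    (θ₀ : ℝ) (astar : A)
    (π : ℝ → C → ℝ) (κ : ℝ → C → A → ℝ)
    (hπ0 : ∀ θ c, 0 ≤ π θ c) (hπ1 : ∀ θ, ∑ c, π θ c = 1)
    (hκ0 : ∀ θ c a, 0 ≤ κ θ c a) (hκ1 : ∀ θ c, ∑ a, κ θ c a = 1)
    (hπpos : ∀ c, 0 < π θ₀ c) (hκpos : ∀ c a, 0 < κ θ₀ c a)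
    (hπdiff : ∀ c, DifferentiableAt ℝ (fun θ => π θ c) θ₀)
    (hκdiff : ∀ c a, DifferentiableAt ℝ (fun θ => κ θ c a) θ₀)
    (n : ℕ) (hn : 2 ≤ n)
    (gpg : (Fin n → C × A) → ℝ)
    (hgpg : ∀ y, gpg y =
      (1 / (n : ℝ)) *
        ∑ i,
          (deriv (fun θ => Real.log (π θ (y i).1)) θ₀ +
              deriv (fun θ => Real.log (κ θ (y i).1 (y i).2)) θ₀) *
            ((if (y i).2 = astar then (1 : ℝ) else 0) -
              (1 / ((n : ℝ) - 1)) *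
                ∑ j ∈ Finset.univ.erase i, (if (y j).2 = astar then (1 : ℝ) else 0)))
    (gvr : (Fin n → C) → ℝ)
    (hgvr : ∀ c, gvr c =
      (1 / (n : ℝ)) *
        ∑ i,
          (deriv (fun θ => Real.log (π θ (c i))) θ₀ *
              (κ θ₀ (c i) astar -
                (1 / ((n : ℝ) - 1)) * ∑ j ∈ Finset.univ.erase i, κ θ₀ (c j) astar) +
            deriv (fun θ => κ θ (c i) astar) θ₀)) :
    ∀ cs : Fin n → C,
      ∑ as : Fin n → A, (∏ i, κ θ₀ (cs i) (as i)) * gpg (fun i => (cs i, as i)) = gvr cs :=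
  conditional_expectation_of_vanilla_pg_eq_var_reduced_pg_general θ₀ astar π κ hκ1 hκpos hκdiff n
    gpg hgpg gvr hgvr
end
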